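/- Let 𝕜 be a field of characteristic zero, n ≥ 0 an integer, Ω ∈ 𝕜[x,y,z] a homogeneous polynomial of degree 3+n with an isolated singularity, and ξ ∈ 𝕜. Let B = P_{Ω−ξ}. Then for every integer w with w < n, every nonpositive w-valuation on B is trivial (that is, every w-valuation ν on B satisfying ν(b) ≤ 0 for all nonzero b satisfies ν(b) = 0 for all nonzero b). -/

import Mathlib

open scoped TensorProduct

/-- A Poisson bracket on a commutative algebra `A` over `𝕜`: a bilinear, antisymmetric
bracket satisfying the Jacobi identity and the Leibniz rule. -/
structure PoissonStructure (𝕜 A : Type*) [CommRing 𝕜] [CommRing A] [Algebra 𝕜 A] where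
  bracket : A → A → A
  add_left : ∀ a b c : A, bracket (a + b) c = bracket a c + bracket b c
  smul_left : ∀ (r : 𝕜) (a b : A), bracket (r • a) b = r • bracket a b
  antisymm : ∀ a b : A, bracket a b = - bracket b a
  jacobi : ∀ a b c : A,
    bracket a (bracket b c) + bracket b (bracket c a) + bracket c (bracket a b) = 0
  leibniz : ∀ a b c : A, bracket a (b * c) = bracket a b * c + b * bracket a c

/-- `f` is a morphism of Poisson algebras. -/
def IsPoissonHom {𝕜 A B : Type*} [CommRing 𝕜] [CommRing A] [CommRing B]
    [Algebra 𝕜 A] [Algebra 𝕜 B]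
    (PA : PoissonStructure 𝕜 A) (PB : PoissonStructure 𝕜 B) (f : A →ₐ[𝕜] B) : Prop :=
  ∀ a b : A, f (PA.bracket a b) = PB.bracket (f a) (f b)

/-- A Poisson algebra is Dixmier if every injective Poisson endomorphism is bijective. -/
def IsDixmier (𝕜 A : Type*) [CommRing 𝕜] [CommRing A] [Algebra 𝕜 A]
    (PA : PoissonStructure 𝕜 A) : Prop :=
  ∀ f : A →ₐ[𝕜] A, IsPoissonHom PA PA f → Function.Injective f → Function.Bijective f

/-- The tensor-product Poisson bracket on `A ⊗[𝕜] B`. -/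
def IsTensorBracket {𝕜 A B : Type*} [CommRing 𝕜] [CommRing A] [CommRing B]
    [Algebra 𝕜 A] [Algebra 𝕜 B] (PA : PoissonStructure 𝕜 A) (PB : PoissonStructure 𝕜 B)
    (PT : PoissonStructure 𝕜 (A ⊗[𝕜] B)) : Prop :=
  ∀ (a a' : A) (b b' : B),
    PT.bracket (a ⊗ₜ[𝕜] b) (a' ⊗ₜ[𝕜] b') =
      PA.bracket a a' ⊗ₜ[𝕜] (b * b') + (a * a') ⊗ₜ[𝕜] PB.bracket b b'

/-- `A` is `R`-Dixmier: every injective Poisson morphism `A → A ⊗ R` has image `A ⊗ 𝕜·1`. -/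
def IsRelDixmier (𝕜 A R : Type*) [CommRing 𝕜] [CommRing A] [CommRing R]
    [Algebra 𝕜 A] [Algebra 𝕜 R] (PA : PoissonStructure 𝕜 A)
    (PT : PoissonStructure 𝕜 (A ⊗[𝕜] R)) : Prop :=
  ∀ f : A →ₐ[𝕜] A ⊗[𝕜] R, IsPoissonHom PA PT f → Function.Injective f →
    Set.range f = Set.range fun a : A => a ⊗ₜ[𝕜] (1 : R)

/-- A Poisson algebra is Poisson simple if its only Poisson ideals are `0` and the whole ring. -/
def IsPoissonSimple {𝕜 A : Type*} [CommRing 𝕜] [CommRing A] [Algebra 𝕜 A]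
    (PA : PoissonStructure 𝕜 A) : Prop :=
  ∀ I : Ideal A, (∀ x : A, ∀ y ∈ I, PA.bracket x y ∈ I) → I = ⊥ ∨ I = ⊤

open MvPolynomial in
/-- The Jacobian Poisson bracket with potential `Ω` on `𝕜[x,y,z]`. -/
noncomputable def jacBracket {𝕜 : Type*} [CommRing 𝕜]
    (Ω f g : MvPolynomial (Fin 3) 𝕜) : MvPolynomial (Fin 3) 𝕜 :=
  Matrix.det (Matrix.of
    ![![pderiv 0 f, pderiv 1 f, pderiv 2 f],
      ![pderiv 0 g, pderiv 1 g, pderiv 2 g],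
      ![pderiv 0 Ω, pderiv 1 Ω, pderiv 2 Ω]])

open MvPolynomial in
/-- `Ω` has an isolated singularity at the origin. -/
def HasIsolatedSingularity {𝕜 : Type*} [Field 𝕜] (Ω : MvPolynomial (Fin 3) 𝕜) : Prop :=
  FiniteDimensional 𝕜
    (MvPolynomial (Fin 3) 𝕜 ⧸ Ideal.span {pderiv (0 : Fin 3) Ω, pderiv 1 Ω, pderiv 2 Ω})

/-- The underlying commutative algebra of `P_{Ω-ξ} = 𝕜[x,y,z]/(Ω-ξ)`. -/
def PQuot (𝕜 : Type*) [CommRing 𝕜] (Ω : MvPolynomial (Fin 3) 𝕜) (ξ : 𝕜) : Type _ :=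
  MvPolynomial (Fin 3) 𝕜 ⧸ Ideal.span {Ω - MvPolynomial.C ξ}

noncomputable instance {𝕜 : Type*} [CommRing 𝕜] (Ω : MvPolynomial (Fin 3) 𝕜) (ξ : 𝕜) :
    CommRing (PQuot 𝕜 Ω ξ) :=
  inferInstanceAs (CommRing (MvPolynomial (Fin 3) 𝕜 ⧸ Ideal.span {Ω - MvPolynomial.C ξ}))

noncomputable instance {𝕜 : Type*} [CommRing 𝕜] (Ω : MvPolynomial (Fin 3) 𝕜) (ξ : 𝕜) :
    Algebra 𝕜 (PQuot 𝕜 Ω ξ) :=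
  inferInstanceAs (Algebra 𝕜 (MvPolynomial (Fin 3) 𝕜 ⧸ Ideal.span {Ω - MvPolynomial.C ξ}))

/-- The canonical (surjective) projection `𝕜[x,y,z] → P_{Ω-ξ}`. -/
noncomputable def PQuot.mk {𝕜 : Type*} [CommRing 𝕜] (Ω : MvPolynomial (Fin 3) 𝕜) (ξ : 𝕜)
    (f : MvPolynomial (Fin 3) 𝕜) : PQuot 𝕜 Ω ξ :=
  Ideal.Quotient.mk (Ideal.span {Ω - MvPolynomial.C ξ}) f

/-- `P` is the Poisson bracket on `P_{Ω-ξ}` induced from the Jacobian bracket on `A_Ω`. -/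
def IsInducedBracket {𝕜 : Type*} [CommRing 𝕜] (Ω : MvPolynomial (Fin 3) 𝕜) (ξ : 𝕜)
    (P : PoissonStructure 𝕜 (PQuot 𝕜 Ω ξ)) : Prop :=
  ∀ f g : MvPolynomial (Fin 3) 𝕜,
    P.bracket (PQuot.mk Ω ξ f) (PQuot.mk Ω ξ g) = PQuot.mk Ω ξ (jacBracket Ω f g)

open PiTensorProduct in
/-- The Poisson bracket on a finite tensor product `⨂[𝕜] i, A i`. -/
def IsPiTensorBracket {𝕜 : Type*} [CommRing 𝕜] {d : ℕ} {A : Fin d → Type*}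
    [∀ i, CommRing (A i)] [∀ i, Algebra 𝕜 (A i)]
    (P : ∀ i, PoissonStructure 𝕜 (A i))
    (PT : PoissonStructure 𝕜 (⨂[𝕜] i, A i)) : Prop :=
  ∀ a b : (i : Fin d) → A i,
    PT.bracket (⨂ₜ[𝕜] i, a i) (⨂ₜ[𝕜] i, b i) =
      ∑ i : Fin d,
        ⨂ₜ[𝕜] j, Function.update (fun j => a j * b j) i ((P i).bracket (a i) (b i)) j

/-- The Poisson-torus bracket associated to a matrix `Λ` on the Laurent polynomial ring
`𝕜[x₁^{±1},…,xₙ^{±1}]`, realized as the group algebra of `ℤⁿ`: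
`{x^u, x^v} = (Σ_{i,j} uᵢ λᵢⱼ vⱼ) x^{u+v}`. -/
def IsTorusBracket {𝕜 : Type*} [CommRing 𝕜] (n : ℕ) (Λ : Matrix (Fin n) (Fin n) 𝕜)
    (P : PoissonStructure 𝕜 (AddMonoidAlgebra 𝕜 (Fin n → ℤ))) : Prop :=
  ∀ u v : Fin n → ℤ,
    P.bracket (AddMonoidAlgebra.single u (1 : 𝕜)) (AddMonoidAlgebra.single v (1 : 𝕜)) =
      (∑ i, ∑ j, (u i : 𝕜) * Λ i j * (v j : 𝕜)) • AddMonoidAlgebra.single (u + v) (1 : 𝕜)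

/-- `ν : A → ℤ ∪ {∞}` is a `w`-valuation on the Poisson algebra `A`. -/
structure IsWValuation {𝕜 A : Type*} [CommRing 𝕜] [CommRing A] [Algebra 𝕜 A]
    (P : PoissonStructure 𝕜 A) (w : ℤ) (ν : A → WithTop ℤ) : Prop where
  eq_top_iff : ∀ a : A, ν a = ⊤ ↔ a = 0
  scalar : ∀ c : 𝕜, c ≠ 0 → ν (algebraMap 𝕜 A c) = 0
  map_mul : ∀ a b : A, ν (a * b) = ν a + ν b
  map_add : ∀ a b : A, min (ν a) (ν b) ≤ ν (a + b)
  map_bracket : ∀ a b : A, ν a + ν b ≤ ν (P.bracket a b) + (w : WithTop ℤ)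

/-!
Let `m` be the least value of `ν` on the coordinates `x, y, z` of `B` and suppose `m < 0`.
The bracket of two coordinates is a partial derivative `Ω_j`, so `ν(Ω_j) ≥ 2m - w`.
As `𝕜[x,y,z]/(Ω_x, Ω_y, Ω_z)` is finite-dimensional, a coordinate `x_i` with `ν(x_i) = m` is
integral modulo the Jacobian ideal; the top homogeneous component of a monic relation gives
`x_i ^ (N + n + 2) = ∑ c_j Ω_j` with every `c_j` homogeneous of degree `N`. Valuing both sides,
`(N + n + 2) m ≥ N m + 2 m - w`, i.e. `w ≥ -n m ≥ n`, a contradiction. So `ν ≥ 0` on the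
coordinates, hence on all of `B`, and nonpositivity forces `ν = 0` away from `0`.
-/

open MvPolynomial

theorem AddValuation.map_prod {R Γ₀ ι : Type*} [CommRing R] [LinearOrderedAddCommMonoidWithTop Γ₀]
    (v : AddValuation R Γ₀) (s : Finset ι) (f : ι → R) :
    v (∏ i ∈ s, f i) = ∑ i ∈ s, v (f i) := by
  classical
  induction s using Finset.induction with
  | empty => simp
  | insert a s ha ih => rw [Finset.prod_insert ha, Finset.sum_insert ha, v.map_mul, ih]

theorem AddValuation.nsmul_le_map_of_isHomogeneous {σ R A Γ₀ : Type*} [CommRing R] [CommRing A]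
    [Algebra R A] [LinearOrderedAddCommMonoidWithTop Γ₀] (v : AddValuation A Γ₀)
    (hv : ∀ r : R, 0 ≤ v (algebraMap R A r)) (φ : MvPolynomial σ R →ₐ[R] A) {m : Γ₀}
    (hm : ∀ i, m ≤ v (φ (X i))) {f : MvPolynomial σ R} {D : ℕ} (hf : f.IsHomogeneous D) :
    D • m ≤ v (φ f) := by
  rw [aeval_unique φ, ← f.support_sum_monomial_coeff, map_sum]
  refine v.map_le_sum fun d hd => ?_
  have hdeg : d.degree = D := by
    rw [Finsupp.degree_eq_weight_one]; exact hf (mem_support_iff.1 hd)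
  rw [aeval_monomial, v.map_mul, Finsupp.prod, v.map_prod, ← hdeg, Finsupp.degree_apply,
    ← Finset.sum_nsmul_assoc]
  calc ∑ i ∈ d.support, d i • m ≤ ∑ i ∈ d.support, v ((φ ∘ X) i ^ d i) :=
        Finset.sum_le_sum fun i _ => v.map_pow _ _ ▸ nsmul_le_nsmul_right (hm i) _
    _ ≤ _ := le_add_of_nonneg_left (hv _)

theorem AddValuation.nonneg_map_of_nonneg_X {σ R A Γ₀ : Type*} [CommRing R] [CommRing A]
    [Algebra R A] [LinearOrderedAddCommMonoidWithTop Γ₀] (v : AddValuation A Γ₀)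
    (hv : ∀ r : R, 0 ≤ v (algebraMap R A r)) (φ : MvPolynomial σ R →ₐ[R] A)
    (hX : ∀ i, 0 ≤ v (φ (X i))) (f : MvPolynomial σ R) : 0 ≤ v (φ f) := by
  rw [← sum_homogeneousComponent f, map_sum]
  refine v.map_le_sum fun k _ => ?_
  simpa using v.nsmul_le_map_of_isHomogeneous hv φ hX (homogeneousComponent_isHomogeneous k f)

theorem homogeneousComponent_add_mul_of_isHomogeneous {σ R : Type*} [CommRing R]
    {g : MvPolynomial σ R} {e : ℕ} (hg : g.IsHomogeneous e) (k : ℕ) (a : MvPolynomial σ R) :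
    homogeneousComponent (k + e) (a * g) = homogeneousComponent k a * g := by
  conv_lhs => rw [← sum_homogeneousComponent a, Finset.sum_mul, map_sum]
  have hterm (j : ℕ) : homogeneousComponent (k + e) (homogeneousComponent j a * g) =
      if j = k then homogeneousComponent j a * g else 0 := by
    rw [homogeneousComponent_of_mem ((homogeneousComponent_isHomogeneous j a).mul hg)]
    simp [eq_comm]
  simp_rw [hterm, Finset.sum_ite_eq', Finset.mem_range]
  split_ifs with hk
  · rfl
  · rw [homogeneousComponent_eq_zero _ _ (by omega), zero_mul]

theorem homogeneousComponent_aeval_X {σ R : Type*} [CommRing R] (q : Polynomial R) (i : σ)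
    (k : ℕ) : homogeneousComponent k (Polynomial.aeval (X i : MvPolynomial σ R) q) =
      q.coeff k • X i ^ k := by
  rw [Polynomial.aeval_eq_sum_range, map_sum]
  have hterm (j : ℕ) : homogeneousComponent k (q.coeff j • (X i : MvPolynomial σ R) ^ j) =
      if j = k then q.coeff j • X i ^ j else 0 := by
    rw [smul_eq_C_mul, homogeneousComponent_of_mem ((isHomogeneous_X_pow i j).C_mul _)]
    simp [eq_comm]
  simp_rw [hterm, Finset.sum_ite_eq', Finset.mem_range]
  split_ifs with hk
  · rfl
  · rw [Polynomial.coeff_eq_zero_of_natDegree_lt (by omega), zero_smul]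

theorem exists_X_pow_eq_sum_mul_of_finiteDimensional {σ ι 𝕜 : Type*} [Field 𝕜] [Fintype ι]
    {g : ι → MvPolynomial σ 𝕜} {e : ℕ} (hg : ∀ j, (g j).IsHomogeneous e)
    [FiniteDimensional 𝕜 (MvPolynomial σ 𝕜 ⧸ Ideal.span (Set.range g))] (i : σ) :
    ∃ (N : ℕ) (c : ι → MvPolynomial σ 𝕜),
      (∀ j, (c j).IsHomogeneous N) ∧ X i ^ (N + e) = ∑ j, c j * g j := by
  obtain ⟨q, hq_monic, hq⟩ := IsIntegral.of_finite 𝕜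
    (Ideal.Quotient.mk (Ideal.span (Set.range g)) (X i))
  -- the factor `X ^ e` pushes the top degree of the relation up to at least `e`
  have hmem : Polynomial.aeval (X i) (q * Polynomial.X ^ e) ∈ Ideal.span (Set.range g) := by
    rw [map_mul]
    refine Ideal.mul_mem_right _ _ (Ideal.Quotient.eq_zero_iff_mem.1 ?_)
    rw [← Ideal.Quotient.mkₐ_eq_mk 𝕜, ← Polynomial.aeval_algHom_apply]
    exact hq
  obtain ⟨a, ha⟩ := Ideal.mem_span_range_iff_exists_fun.1 hmem
  refine ⟨q.natDegree, fun j => homogeneousComponent q.natDegree (a j),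
    fun j => homogeneousComponent_isHomogeneous _ _, ?_⟩
  have := congrArg (homogeneousComponent (q.natDegree + e)) ha.symm
  rw [homogeneousComponent_aeval_X, Polynomial.coeff_mul_X_pow, hq_monic.coeff_natDegree,
    one_smul, map_sum] at this
  simpa only [homogeneousComponent_add_mul_of_isHomogeneous (hg _)] using this

section WValuation

variable {𝕜 A : Type*} [CommRing 𝕜] [CommRing A] [Algebra 𝕜 A] {P : PoissonStructure 𝕜 A}
  {w : ℤ} {ν : A → WithTop ℤ}

def IsWValuation.toAddValuation [Nontrivial 𝕜] (hν : IsWValuation P w ν) :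
    AddValuation A (WithTop ℤ) :=
  AddValuation.of ν ((hν.eq_top_iff 0).2 rfl) (by simpa using hν.scalar 1 one_ne_zero)
    hν.map_add hν.map_mul

@[simp]
theorem IsWValuation.toAddValuation_apply [Nontrivial 𝕜] (hν : IsWValuation P w ν) (a : A) :
    hν.toAddValuation a = ν a :=
  rfl

theorem IsWValuation.nonneg_algebraMap (hν : IsWValuation P w ν) (c : 𝕜) :
    0 ≤ ν (algebraMap 𝕜 A c) := by
  rcases eq_or_ne c 0 with rfl | hc
  · simp [(hν.eq_top_iff 0).2 rfl]
  · exact (hν.scalar c hc).ge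

end WValuation

theorem jacBracket_X_X {R : Type*} [CommRing R] (Ω : MvPolynomial (Fin 3) R) (j : Fin 3) :
    jacBracket Ω (X (j + 1)) (X (j + 2)) = pderiv j Ω := by
  fin_cases j <;> simp [jacBracket, Matrix.det_fin_three, pderiv_X]

theorem hasIsolatedSingularity_iff {𝕜 : Type*} [Field 𝕜] (Ω : MvPolynomial (Fin 3) 𝕜) :
    HasIsolatedSingularity Ω ↔ FiniteDimensional 𝕜
      (MvPolynomial (Fin 3) 𝕜 ⧸ Ideal.span (Set.range fun j => pderiv j Ω)) := by
  have hrange : (Set.range fun j : Fin 3 => pderiv j Ω) = {pderiv 0 Ω, pderiv 1 Ω, pderiv 2 Ω} := by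
    ext
    simp [Fin.exists_fin_succ, eq_comm]
  rw [HasIsolatedSingularity, hrange]

namespace PQuot

variable {R : Type*} [CommRing R] (Ω : MvPolynomial (Fin 3) R) (ξ : R)

noncomputable def mkₐ : MvPolynomial (Fin 3) R →ₐ[R] PQuot R Ω ξ :=
  Ideal.Quotient.mkₐ R _

@[simp]
theorem mkₐ_apply (f : MvPolynomial (Fin 3) R) : mkₐ Ω ξ f = PQuot.mk Ω ξ f :=
  rfl

theorem mk_surjective : Function.Surjective (PQuot.mk Ω ξ) :=
  Ideal.Quotient.mk_surjective

end PQuot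

section PQuot

variable {𝕜 : Type*} [Field 𝕜] {Ω : MvPolynomial (Fin 3) 𝕜} {ξ : 𝕜}
  {P : PoissonStructure 𝕜 (PQuot 𝕜 Ω ξ)} {w : ℤ} {ν : PQuot 𝕜 Ω ξ → WithTop ℤ}

theorem IsWValuation.two_mul_sub_le_mk_pderiv (hP : IsInducedBracket Ω ξ P)
    (hν : IsWValuation P w ν) {m : ℤ} (hm : ∀ i, (m : WithTop ℤ) ≤ ν (PQuot.mk Ω ξ (X i)))
    (j : Fin 3) : ((2 * m - w : ℤ) : WithTop ℤ) ≤ ν (PQuot.mk Ω ξ (pderiv j Ω)) := by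
  rw [← WithTop.add_le_add_iff_right (WithTop.coe_ne_top (a := w)), ← WithTop.coe_add,
    sub_add_cancel, two_mul, WithTop.coe_add, ← jacBracket_X_X, ← hP]
  exact (add_le_add (hm _) (hm _)).trans (hν.map_bracket _ _)

theorem IsWValuation.nonneg_mk_X {n : ℕ} (hhom : Ω.IsHomogeneous (3 + n))
    (hiso : HasIsolatedSingularity Ω) (hP : IsInducedBracket Ω ξ P) (hν : IsWValuation P w ν)
    (hw : w < n) (i : Fin 3) : 0 ≤ ν (PQuot.mk Ω ξ (X i)) := by
  by_contra! hneg
  obtain ⟨i₀, -, hmin⟩ := Finset.univ.exists_min_image (fun i => ν (PQuot.mk Ω ξ (X i)))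
    ⟨i, Finset.mem_univ i⟩
  have hneg₀ := (hmin i (Finset.mem_univ i)).trans_lt hneg
  obtain ⟨m, hm⟩ := WithTop.ne_top_iff_exists.1 hneg₀.ne_top
  have hm_neg : m < 0 := by rw [← hm] at hneg₀; exact_mod_cast hneg₀
  have hm_le (i : Fin 3) : (m : WithTop ℤ) ≤ ν (PQuot.mk Ω ξ (X i)) :=
    hm ▸ hmin i (Finset.mem_univ i)
  have := (hasIsolatedSingularity_iff Ω).1 hiso
  obtain ⟨N, c, hc, hX⟩ :=
    exists_X_pow_eq_sum_mul_of_finiteDimensional (fun j => hhom.pderiv (i := j)) i₀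
  set v := hν.toAddValuation
  have hle : ((N * m + (2 * m - w) : ℤ) : WithTop ℤ) ≤
      v (PQuot.mkₐ Ω ξ (X i₀ ^ (N + (3 + n - 1)))) := by
    rw [hX, map_sum]
    refine v.map_le_sum fun j _ => ?_
    rw [_root_.map_mul, v.map_mul, WithTop.coe_add]
    refine add_le_add ?_ (hν.two_mul_sub_le_mk_pderiv hP hm_le j)
    have := v.nsmul_le_map_of_isHomogeneous hν.nonneg_algebraMap (PQuot.mkₐ Ω ξ) hm_le (hc j)
    rwa [← WithTop.coe_nsmul, nsmul_eq_mul] at this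
  rw [map_pow, v.map_pow, IsWValuation.toAddValuation_apply, PQuot.mkₐ_apply, ← hm,
    ← WithTop.coe_nsmul, WithTop.coe_le_coe, nsmul_eq_mul, show 3 + n - 1 = n + 2 by omega] at hle
  push_cast at hle
  nlinarith

end PQuot

theorem potential_nonpositive_wValuation_trivial_general
    {𝕜 : Type*} [Field 𝕜] (n : ℕ)
    (Ω : MvPolynomial (Fin 3) 𝕜) (hhom : Ω.IsHomogeneous (3 + n))
    (hiso : HasIsolatedSingularity Ω) (ξ : 𝕜)
    (P : PoissonStructure 𝕜 (PQuot 𝕜 Ω ξ)) (hP : IsInducedBracket Ω ξ P)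
    (w : ℤ) (hw : w < (n : ℤ))
    (ν : PQuot 𝕜 Ω ξ → WithTop ℤ) (hν : IsWValuation P w ν)
    (hnonpos : ∀ b : PQuot 𝕜 Ω ξ, b ≠ 0 → ν b ≤ 0) :
    ∀ b : PQuot 𝕜 Ω ξ, b ≠ 0 → ν b = 0 := by
  intro b hb
  obtain ⟨f, rfl⟩ := PQuot.mk_surjective Ω ξ b
  exact le_antisymm (hnonpos _ hb) <| hν.toAddValuation.nonneg_map_of_nonneg_X
    hν.nonneg_algebraMap (PQuot.mkₐ Ω ξ) (hν.nonneg_mk_X hhom hiso hP hw) f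

/-- Lemma 2.14(1): for `B = P_{Ω-ξ}` with `Ω` an i.s. potential of degree `3+n` and `w < n`,
every nonpositive `w`-valuation on `B` is trivial. -/
theorem potential_nonpositive_wValuation_trivial
    {𝕜 : Type*} [Field 𝕜] [CharZero 𝕜] (n : ℕ)
    (Ω : MvPolynomial (Fin 3) 𝕜) (hhom : Ω.IsHomogeneous (3 + n))
    (hiso : HasIsolatedSingularity Ω) (ξ : 𝕜)
    (P : PoissonStructure 𝕜 (PQuot 𝕜 Ω ξ)) (hP : IsInducedBracket Ω ξ P)
    (w : ℤ) (hw : w < (n : ℤ))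
    (ν : PQuot 𝕜 Ω ξ → WithTop ℤ) (hν : IsWValuation P w ν)
    (hnonpos : ∀ b : PQuot 𝕜 Ω ξ, b ≠ 0 → ν b ≤ 0) :
    ∀ b : PQuot 𝕜 Ω ξ, b ≠ 0 → ν b = 0 :=
  potential_nonpositive_wValuation_trivial_general n Ω hhom hiso ξ P hP w hw ν hν hnonpos
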